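/- Let U and V be Hermitian complex n×n matrices, T an arbitrary complex n×n matrix, and 1 < p, q < ∞ with 1/p + 1/q = 1. Then |Tr[T U T* V]| ≤ Tr[T*T |U|^p]^{1/p} · Tr[T T* |V|^q]^{1/q}. -/

import Mathlib

open Matrix MeasureTheory
open scoped ComplexOrder ENNReal RealInnerProductSpace

/-- The modulus `|A| = (Aᴴ A)^(1/2)` of a complex matrix. -/
noncomputable def matAbs {n : ℕ} (A : Matrix (Fin n) (Fin n) ℂ) : Matrix (Fin n) (Fin n) ℂ :=
  ((Matrix.posSemidef_conjTranspose_mul_self A).1.eigenvectorUnitary : Matrix (Fin n) (Fin n) ℂ) *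
    Matrix.diagonal ((↑) ∘ (√·) ∘ (Matrix.posSemidef_conjTranspose_mul_self A).1.eigenvalues) *
    (star (Matrix.posSemidef_conjTranspose_mul_self A).1.eigenvectorUnitary : Matrix (Fin n) (Fin n) ℂ)

lemma matAbs_posSemidef {n : ℕ} (A : Matrix (Fin n) (Fin n) ℂ) : (matAbs A).PosSemidef :=
  by
    unfold matAbs
    rw [Matrix.star_eq_conjTranspose]
    refine Matrix.PosSemidef.mul_mul_conjTranspose_same ?_ _
    refine Matrix.posSemidef_diagonal_iff.mpr fun i => ?_
    exact Complex.zero_le_real.mpr (Real.sqrt_nonneg _)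

/-- Singular values of a complex matrix: the eigenvalues of `|A|`. -/
noncomputable def singVals {n : ℕ} (A : Matrix (Fin n) (Fin n) ℂ) : Fin n → ℝ :=
  (matAbs_posSemidef A).1.eigenvalues

/-- Schatten `p`-norm for `p ∈ [1,∞]`: the `ℓᵖ` norm of the singular values. -/
noncomputable def schatten {n : ℕ} (p : ℝ≥0∞) (A : Matrix (Fin n) (Fin n) ℂ) : ℝ :=
  if p = ⊤ then ⨆ i, singVals A i
  else (∑ i, (singVals A i) ^ p.toReal) ^ (1 / p.toReal)

/-- Real power of a positive semidefinite matrix via its spectral decomposition. -/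
noncomputable def psdRpow {n : ℕ} {A : Matrix (Fin n) (Fin n) ℂ} (hA : A.PosSemidef) (r : ℝ) :
    Matrix (Fin n) (Fin n) ℂ :=
  (hA.1.eigenvectorUnitary : Matrix (Fin n) (Fin n) ℂ) *
    (Matrix.diagonal (fun i => ((hA.1.eigenvalues i ^ r : ℝ) : ℂ))) *
    (star (hA.1.eigenvectorUnitary : Matrix (Fin n) (Fin n) ℂ))

/-! Diagonalise `U = W Λ W*`, `V = X Μ X*` with `W, X` unitary and put `M = X* T W`. Each of the
three traces is then a sum over pairs `(i, j)` against the same nonnegative weights `|M_{ji}|²`: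
`Tr[T U T* V] = ∑ λᵢ μⱼ |M_{ji}|²`, `Tr[T*T |U|^p] = ∑ |λᵢ|^p |M_{ji}|²` and
`Tr[T T* |V|^q] = ∑ |μⱼ|^q |M_{ji}|²`, so the inequality is Hölder's inequality for a weighted sum. -/

lemma psdRpow_eq_cfc {n : ℕ} {A : Matrix (Fin n) (Fin n) ℂ} (hA : A.PosSemidef) (r : ℝ) :
    psdRpow hA r = cfc (fun x : ℝ => x ^ r) A := by
  rw [hA.1.cfc_eq]
  rfl

lemma Matrix.IsHermitian.matAbs_eq_cfc_abs {n : ℕ} {U : Matrix (Fin n) (Fin n) ℂ}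
    (hU : U.IsHermitian) : matAbs U = cfc (fun x : ℝ => |x|) U := by
  calc matAbs U = cfc Real.sqrt (Uᴴ * U) :=
        ((posSemidef_conjTranspose_mul_self U).1.cfc_eq _).symm
    _ = cfc Real.sqrt (cfc (fun x : ℝ => x ^ 2) U) := by rw [cfc_pow_id U 2, hU.eq, pow_two]
    _ = cfc (fun x : ℝ => |x|) U := by
      rw [← cfc_comp Real.sqrt (fun x : ℝ => x ^ 2) U]
      simp only [Function.comp_def, Real.sqrt_sq_eq_abs]

lemma Matrix.IsHermitian.psdRpow_matAbs {n : ℕ} {U : Matrix (Fin n) (Fin n) ℂ}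
    (hU : U.IsHermitian) (r : ℝ) :
    psdRpow (matAbs_posSemidef U) r = cfc (fun x : ℝ => |x| ^ r) U := by
  rw [psdRpow_eq_cfc, hU.matAbs_eq_cfc_abs,
    ← cfc_comp (fun x : ℝ => x ^ r) (fun x : ℝ => |x|) U hU.isSelfAdjoint
      ((U.finite_real_spectrum.image _).continuousOn _)]
  rfl

namespace Matrix

variable {ι : Type*} [Fintype ι] [DecidableEq ι]

lemma trace_mul_conj_mul_conjTranspose_mul_conj {R : Type*} [CommRing R] [StarRing R]
    (T D E : Matrix ι ι R) (W X : unitaryGroup ι R) :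
    (T * ((W : Matrix ι ι R) * D * (star W : Matrix ι ι R)) * Tᴴ *
        ((X : Matrix ι ι R) * E * (star X : Matrix ι ι R))).trace =
      ((star X : Matrix ι ι R) * T * (W : Matrix ι ι R) * D *
        ((star X : Matrix ι ι R) * T * (W : Matrix ι ι R))ᴴ * E).trace := by
  set M := (star X : Matrix ι ι R) * T * (W : Matrix ι ι R)
  have hXM : (X : Matrix ι ι R) * M = T * W := by
    simp only [M, ← mul_assoc, Unitary.mul_star_self_of_mem X.2, one_mul]
  have hMH : Mᴴ = (star W : Matrix ι ι R) * Tᴴ * X := by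
    simp only [M, conjTranspose_mul, star_eq_conjTranspose, conjTranspose_conjTranspose,
      mul_assoc]
  have hconj : T * ((W : Matrix ι ι R) * D * (star W : Matrix ι ι R)) * Tᴴ *
        ((X : Matrix ι ι R) * E * (star X : Matrix ι ι R)) =
      X * (M * D * Mᴴ * E) * (star X : Matrix ι ι R) := by
    simp only [hMH, ← mul_assoc, hXM]
  rw [hconj, trace_mul_cycle, Unitary.star_mul_self_of_mem X.2, one_mul]

lemma trace_mul_diagonal_mul_conjTranspose_mul_diagonal {𝕜 : Type*} [RCLike 𝕜]
    (M : Matrix ι ι 𝕜) (d e : ι → 𝕜) :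
    (M * diagonal d * Mᴴ * diagonal e).trace =
      ∑ k : ι × ι, d k.1 * e k.2 * (‖M k.2 k.1‖ ^ 2 : ℝ) := by
  simp only [trace, diag, mul_apply, diagonal_apply, conjTranspose_apply, mul_ite, mul_zero,
    Finset.sum_ite_eq', Finset.mem_univ, if_true, Finset.sum_mul, Fintype.sum_prod_type]
  rw [Finset.sum_comm]
  refine Finset.sum_congr rfl fun j _ => Finset.sum_congr rfl fun i _ => ?_
  rw [RCLike.ofReal_pow, ← RCLike.mul_conj, RCLike.star_def]
  ring

lemma IsHermitian.trace_mul_cfc_mul_conjTranspose_mul_cfc {𝕜 : Type*} [RCLike 𝕜]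
    {U V : Matrix ι ι 𝕜} (hU : U.IsHermitian) (hV : V.IsHermitian)
    (T : Matrix ι ι 𝕜) (f g : ℝ → ℝ) :
    (T * cfc f U * Tᴴ * cfc g V).trace =
      ((∑ k : ι × ι, f (hU.eigenvalues k.1) * g (hV.eigenvalues k.2) *
        ‖((star hV.eigenvectorUnitary : Matrix ι ι 𝕜) * T * hU.eigenvectorUnitary) k.2 k.1‖ ^ 2 :
          ℝ) : 𝕜) := by
  rw [hU.cfc_eq, hV.cfc_eq, IsHermitian.cfc, IsHermitian.cfc, Unitary.conjStarAlgAut_apply,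
    Unitary.conjStarAlgAut_apply, trace_mul_conj_mul_conjTranspose_mul_conj,
    trace_mul_diagonal_mul_conjTranspose_mul_diagonal]
  push_cast
  rfl

end Matrix

lemma Real.abs_sum_mul_mul_le_weighted_Lp_mul_Lq {ι : Type*} (s : Finset ι) {p q : ℝ}
    (hpq : p.HolderConjugate q) (a b w : ι → ℝ) (hw : ∀ i ∈ s, 0 ≤ w i) :
    |∑ i ∈ s, a i * b i * w i| ≤
      (∑ i ∈ s, |a i| ^ p * w i) ^ (1 / p) * (∑ i ∈ s, |b i| ^ q * w i) ^ (1 / q) := by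
  have hsplit : ∀ i ∈ s,
      |a i * b i * w i| = (|a i| * w i ^ (1 / p)) * (|b i| * w i ^ (1 / q)) := fun i hi => by
    rw [mul_mul_mul_comm, ← Real.rpow_add' (hw i hi) (by simp [hpq.inv_add_inv_eq_one]),
      one_div, one_div, hpq.inv_add_inv_eq_one, Real.rpow_one, abs_mul, abs_mul,
      abs_of_nonneg (hw i hi)]
  have hpow : ∀ {r : ℝ}, r ≠ 0 → ∀ (x : ι → ℝ), ∀ i ∈ s,
      (|x i| * w i ^ (1 / r)) ^ r = |x i| ^ r * w i := fun hr x i hi => by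
    rw [Real.mul_rpow (abs_nonneg _) (Real.rpow_nonneg (hw i hi) _), ← Real.rpow_mul (hw i hi),
      one_div_mul_cancel hr, Real.rpow_one]
  calc |∑ i ∈ s, a i * b i * w i|
      ≤ ∑ i ∈ s, (|a i| * w i ^ (1 / p)) * (|b i| * w i ^ (1 / q)) :=
        (Finset.abs_sum_le_sum_abs _ _).trans_eq (Finset.sum_congr rfl hsplit)
    _ ≤ _ := Real.inner_le_Lp_mul_Lq_of_nonneg s hpq
        (fun i hi => mul_nonneg (abs_nonneg _) (Real.rpow_nonneg (hw i hi) _))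
        (fun i hi => mul_nonneg (abs_nonneg _) (Real.rpow_nonneg (hw i hi) _))
    _ = _ := by
      rw [Finset.sum_congr rfl (hpow hpq.ne_zero a),
        Finset.sum_congr rfl (hpow hpq.symm.ne_zero b)]

theorem trace_holder_general {n : ℕ} (U V T : Matrix (Fin n) (Fin n) ℂ)
    (hU : U.IsHermitian) (hV : V.IsHermitian)
    (p q : ℝ) (hp : 1 < p) (hpq : 1 / p + 1 / q = 1) :
    ‖(T * U * Tᴴ * V).trace‖ ≤
      ((Tᴴ * T * psdRpow (matAbs_posSemidef U) p).trace).re ^ (1 / p) *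
      ((T * Tᴴ * psdRpow (matAbs_posSemidef V) q).trace).re ^ (1 / q) := by
  have hpq' : p.HolderConjugate q :=
    Real.holderConjugate_iff.mpr ⟨hp, by simpa only [one_div] using hpq⟩
  obtain ⟨w, hw, key⟩ : ∃ w : Fin n × Fin n → ℝ, (∀ k, 0 ≤ w k) ∧ ∀ f g : ℝ → ℝ,
      (T * cfc f U * Tᴴ * cfc g V).trace =
        ((∑ k, f (hU.eigenvalues k.1) * g (hV.eigenvalues k.2) * w k : ℝ) : ℂ) :=
    ⟨_, fun _ => sq_nonneg _, hU.trace_mul_cfc_mul_conjTranspose_mul_cfc hV T⟩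
  have hUV := key (fun x => x) (fun x => x)
  rw [cfc_id' ℝ U, cfc_id' ℝ V] at hUV
  have hTU := key (fun x => |x| ^ p) (fun _ => 1)
  rw [cfc_const_one ℝ V, mul_one, ← trace_mul_comm, ← mul_assoc] at hTU
  have hTV := key (fun _ => 1) (fun x => |x| ^ q)
  rw [cfc_const_one ℝ U, mul_one] at hTV
  rw [hU.psdRpow_matAbs, hV.psdRpow_matAbs, hUV, hTU, hTV]
  simp only [mul_one, one_mul, Complex.norm_real, Real.norm_eq_abs, Complex.ofReal_re]
  exact Real.abs_sum_mul_mul_le_weighted_Lp_mul_Lq _ hpq' _ _ _ fun k _ => hw k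

/-- trace Hölder inequality
`|Tr[T U T* V]| ≤ Tr[T*T |U|^p]^(1/p) · Tr[T T* |V|^q]^(1/q)` for Hermitian `U, V`,
arbitrary `T`, and conjugate exponents `1 < p, q < ∞`. -/
theorem trace_holder {n : ℕ} (U V T : Matrix (Fin n) (Fin n) ℂ)
    (hU : U.IsHermitian) (hV : V.IsHermitian)
    (p q : ℝ) (hp : 1 < p) (hq : 1 < q) (hpq : 1 / p + 1 / q = 1) :
    ‖(T * U * Tᴴ * V).trace‖ ≤
      ((Tᴴ * T * psdRpow (matAbs_posSemidef U) p).trace).re ^ (1 / p) *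
      ((T * Tᴴ * psdRpow (matAbs_posSemidef V) q).trace).re ^ (1 / q) :=
  trace_holder_general U V T hU hV p q hp hpq
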